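/- For natural numbers l_i ≤ r_i and α_i > 0, the finite sum identity Σ_{j=l}^{r} C(r,j) (α−1)_{r−j} (j!)²/(j−l)! = (r! · l!/(r−l)!) · (α+l)_{r−l} holds. -/

import Mathlib

/-!
With `j = l + k` and `m = r - l`, the `k`-th term equals
`r! l! / m! · C(m, k) (l+1)_k (α-1)_{m-k}`, so the sum is `r! l! / m!` times the
Chu–Vandermonde expansion of `(l + 1 + (α - 1))_m = (α + l)_m`.
-/

noncomputable def poch (a : ℝ) (n : ℕ) : ℝ := (ascPochhammer ℝ n).eval a

open Finset
open scoped Nat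

lemma poch_succ (a : ℝ) (n : ℕ) : poch a (n + 1) = poch a n * (a + n) :=
  ascPochhammer_succ_eval n a

theorem poch_add (x y : ℝ) (m : ℕ) :
    poch (x + y) m =
      ∑ ij ∈ antidiagonal m, (m.choose ij.1 : ℝ) * (poch x ij.1 * poch y ij.2) := by
  induction m with
  | zero => simp [poch]
  | succ m ih =>
    rw [sum_antidiagonal_choose_succ_mul (fun i j => poch x i * poch y j) m, ← sum_add_distrib,
      poch_succ, ih, sum_mul]
    refine sum_congr rfl fun ij hij => ?_
    have hm : ij.1 + ij.2 = m := mem_antidiagonal.mp hij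
    have hm' : (ij.1 : ℝ) + ij.2 = m := by exact_mod_cast hm
    rw [poch_succ, poch_succ, ← Nat.choose_symm_of_eq_add hm.symm]
    linear_combination -(m.choose ij.1 : ℝ) * poch x ij.1 * poch y ij.2 * hm'

lemma factorial_mul_poch_add_one (l k : ℕ) : (l ! : ℝ) * poch (l + 1) k = (l + k)! := by
  simpa [poch] using factorial_mul_ascPochhammer ℝ l k

lemma choose_add_mul_factorial_sq_div {l m k : ℕ} (hk : k ≤ m) :
    ((l + m).choose (l + k) : ℝ) * ((l + k)! : ℝ) ^ 2 / k ! =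
      (l + m)! * l ! / m ! * ((m.choose k : ℝ) * poch (l + 1) k) := by
  rw [Nat.cast_choose ℝ (by omega : l + k ≤ l + m), Nat.cast_choose ℝ hk,
    Nat.add_sub_add_left, ← factorial_mul_poch_add_one l k]
  field_simp

theorem finite_sum_poch_identity_general (α : ℝ) (l r : ℕ) (hlr : l ≤ r) :
    ∑ j ∈ Finset.Icc l r,
        (r.choose j : ℝ) * poch (α - 1) (r - j) * ((j.factorial : ℝ)) ^ 2 /
          ((j - l).factorial : ℝ) =
      (r.factorial : ℝ) * (l.factorial : ℝ) / ((r - l).factorial : ℝ) *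
        poch (α + l) (r - l) := by
  obtain ⟨m, rfl⟩ := Nat.exists_eq_add_of_le hlr
  rw [← Ico_add_one_right_eq_Icc, sum_Ico_eq_sum_range, show l + m + 1 - l = m + 1 by omega,
    Nat.add_sub_cancel_left, show α + l = (l + 1 : ℝ) + (α - 1) by ring, poch_add,
    Nat.sum_antidiagonal_eq_sum_range_succ_mk, mul_sum]
  refine sum_congr rfl fun k hk => ?_
  rw [Nat.add_sub_add_left, Nat.add_sub_cancel_left]
  linear_combination poch (α - 1) (m - k) *
    choose_add_mul_factorial_sq_div (l := l) (Nat.lt_succ_iff.mp (mem_range.mp hk))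

theorem finite_sum_poch_identity (α : ℝ) (hα : 0 < α) (l r : ℕ) (hlr : l ≤ r) :
    ∑ j ∈ Finset.Icc l r,
        (r.choose j : ℝ) * poch (α - 1) (r - j) * ((j.factorial : ℝ)) ^ 2 /
          ((j - l).factorial : ℝ) =
      (r.factorial : ℝ) * (l.factorial : ℝ) / ((r - l).factorial : ℝ) *
        poch (α + l) (r - l) :=
  finite_sum_poch_identity_general α l r hlr
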